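/- If b is in product BMO and α is an H^1 atom supported on a set A (i.e., α = ∑_{R⊆A}⟨α,h_R⟩h_R with ‖α‖_2 ≤ |A|^{-1/2}), then ∑_{R⊆A} |⟨b,h_R⟩ ⟨α,h_R⟩| ≤ ‖b‖_{BMO_d}; consequently the dual paraproduct B*(b,·) maps H^1(ℝ^d) to L^1 with norm ≲ ‖b‖_{BMO_d}. -/

import Mathlib

open MeasureTheory Set ENNReal

noncomputable section

/-- The dyadic interval `[j 2^k, (j+1) 2^k)`. -/
def dyadicI (k j : ℤ) : Set ℝ := Set.Ico ((j : ℝ) * 2 ^ k) (((j : ℝ) + 1) * 2 ^ k)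

/-- The Haar function adapted to the dyadic interval `[j 2^k, (j+1) 2^k)`:
`h_I = |I|^{-1/2} (-1_{I_-} + 1_{I_+})`. -/
def haarFn (k j : ℤ) : ℝ → ℝ := fun x =>
  ((2 : ℝ) ^ k) ^ (-(1 : ℝ) / 2) *
    (Set.indicator (dyadicI (k - 1) (2 * j + 1)) 1 x -
      Set.indicator (dyadicI (k - 1) (2 * j)) 1 x)

/-- The dyadic Riesz potential `I_α f = ∑_{K ∈ D} |K|^{-α} ⟨f, 1_K⟩ 1_K`. -/
def riesz (α : ℝ) (f : ℝ → ℝ) : ℝ → ℝ := fun x =>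
  ∑' q : ℤ × ℤ, ((2 : ℝ) ^ q.1) ^ (-α) * (∫ y in dyadicI q.1 q.2, f y) *
    Set.indicator (dyadicI q.1 q.2) 1 x

/-- The constant `c_α = ∑_{n=1}^∞ 2^{-n(1-α)}`. -/
def cst (α : ℝ) : ℝ := ∑' n : ℕ, (2 : ℝ) ^ (-((n : ℝ) + 1) * (1 - α))

/-- The dyadic rectangle in ℝ^d indexed by scales/positions `r i = (k_i, j_i)`. -/
def rect {d : ℕ} (r : Fin d → ℤ × ℤ) : Set (Fin d → ℝ) :=
  Set.univ.pi fun i => dyadicI (r i).1 (r i).2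

/-- The product Haar function h_R = ∏_i h_(R_i). -/
def haarR {d : ℕ} (r : Fin d → ℤ × ℤ) : (Fin d → ℝ) → ℝ := fun x =>
  ∏ i, haarFn (r i).1 (r i).2 (x i)

/-- The Chang–Fefferman product BMO norm: sup over open sets U of finite
measure of (|U|⁻¹ ∑_(R ⊆ U) |⟨b, h_R⟩|²)^(1/2). -/
def bmoProd (d : ℕ) (b : (Fin d → ℝ) → ℝ) : ℝ≥0∞ :=
  ⨆ U : {U : Set (Fin d → ℝ) // IsOpen U ∧ volume U < ⊤},
    ((volume U.1)⁻¹ *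
      ∑' r : {r : Fin d → ℤ × ℤ // rect r ⊆ U.1},
        ENNReal.ofReal ((∫ y, b y * haarR r.1 y) ^ 2)) ^ ((1 : ℝ) / 2)

lemma two_zpow_pos (k : ℤ) : (0:ℝ) < 2 ^ k := zpow_pos (by norm_num) k

lemma mem_dyadicI {k j : ℤ} {x : ℝ} : x ∈ dyadicI k j ↔ ⌊x / 2 ^ k⌋ = j := by
  rw [dyadicI, Set.mem_Ico, Int.floor_eq_iff]
  have h := two_zpow_pos k
  rw [le_div_iff₀ h, div_lt_iff₀ h]

lemma measurableSet_dyadicI (k j : ℤ) : MeasurableSet (dyadicI k j) := measurableSet_Ico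

lemma volume_dyadicI (k j : ℤ) : volume (dyadicI k j) = ENNReal.ofReal ((2:ℝ) ^ k) := by
  rw [dyadicI, Real.volume_Ico]; congr 1; ring

lemma dyadicI_subset {k K : ℤ} (j : ℤ) (h : k ≤ K) :
    dyadicI k j ⊆ dyadicI K (j.ediv (2 ^ (K - k).toNat)) := by
  intro x hx
  rw [dyadicI, mem_Ico] at hx ⊢
  obtain ⟨hx1, hx2⟩ := hx
  set n := (K - k).toNat with hn
  set m := j.ediv (2 ^ n) with hm
  set s := j.emod (2 ^ n) with hs
  have h2 : (2:ℝ) ^ K = (2:ℝ) ^ (n:ℕ) * 2 ^ k := by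
    rw [← zpow_natCast (2:ℝ) n, ← zpow_add₀ (by norm_num : (2:ℝ) ≠ 0)]
    congr 1; omega
  have hmod : (2:ℤ) ^ n * m + s = j := Int.mul_ediv_add_emod j (2 ^ n)
  have h0 : 0 ≤ s := Int.emod_nonneg j (by positivity)
  have h1 : s < 2 ^ n := Int.emod_lt_of_pos j (by positivity)
  have hkpos := two_zpow_pos k
  have hj : (j:ℝ) = 2 ^ (n:ℕ) * (m:ℝ) + (s:ℝ) := by exact_mod_cast hmod.symm
  have hs0 : (0:ℝ) ≤ (s:ℝ) := by exact_mod_cast h0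
  have hs1 : (s:ℝ) + 1 ≤ 2 ^ (n:ℕ) := by exact_mod_cast (by omega : s + 1 ≤ 2 ^ n)
  constructor
  · rw [h2]
    calc (m:ℝ) * (2 ^ (n:ℕ) * 2 ^ k) = (2 ^ (n:ℕ) * (m:ℝ)) * 2 ^ k := by ring
    _ ≤ (j:ℝ) * 2 ^ k := by
        apply mul_le_mul_of_nonneg_right _ hkpos.le
        rw [hj]; linarith
    _ ≤ x := hx1
  · rw [h2]
    calc x < ((j:ℝ) + 1) * 2 ^ k := hx2
    _ = ((j:ℝ) + 1) * 2 ^ k := rfl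
    _ ≤ (((m:ℝ) + 1) * 2 ^ (n:ℕ)) * 2 ^ k := by
        apply mul_le_mul_of_nonneg_right _ hkpos.le
        rw [hj]; linarith
    _ = ((m:ℝ) + 1) * (2 ^ (n:ℕ) * 2 ^ k) := by ring

lemma dyadicI_inter_of_le {k K : ℤ} (h : k ≤ K) (j m : ℤ) :
    dyadicI k j ∩ dyadicI K m =
      if j / (2 ^ (K - k).toNat : ℤ) = m then dyadicI k j else (∅ : Set ℝ) := by
  split_ifs with he
  · rw [inter_eq_left]; exact he ▸ dyadicI_subset j h
  · ext x
    simp only [mem_inter_iff, mem_empty_iff_false, iff_false, not_and]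
    intro h1 h2
    exact he ((mem_dyadicI.1 (dyadicI_subset j h h1)).symm.trans (mem_dyadicI.1 h2))

lemma ediv_two_pow_succ (j' : ℤ) (p : ℕ) :
    (2 * j' + 1) / (2:ℤ) ^ (p + 1) = (2 * j') / (2:ℤ) ^ (p + 1) := by
  have hpos : (0:ℤ) < 2 ^ (p + 1) := by positivity
  set q := (2 * j') / (2:ℤ) ^ (p + 1) with hq
  have hmod : (2:ℤ) ^ (p+1) * q + (2 * j') % 2 ^ (p+1) = 2 * j' :=
    Int.mul_ediv_add_emod (2 * j') (2 ^ (p + 1))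
  have h0 : 0 ≤ (2 * j') % 2 ^ (p+1) := Int.emod_nonneg _ hpos.ne'
  have h1 : (2 * j') % 2 ^ (p+1) < 2 ^ (p+1) := Int.emod_lt_of_pos _ hpos
  have hsp : (2:ℤ) ^ (p+1) = 2 * 2 ^ p := by ring
  have key : (2:ℤ) ^ (p+1) * q = 2 * (2 ^ p * q) := by rw [hsp]; ring
  have heven : ∃ t, (2 * j') % 2 ^ (p+1) = 2 * t := ⟨j' - 2 ^ p * q, by omega⟩
  obtain ⟨t, ht⟩ := heven
  have hlt : (2 * j') % 2 ^ (p+1) + 1 < 2 ^ (p+1) := by omega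
  have hcomm : q * 2 ^ (p+1) = 2 ^ (p+1) * q := by ring
  have h2 : (2 * j' + 1) = ((2 * j') % 2 ^ (p+1) + 1) + q * 2 ^ (p+1) := by omega
  rw [h2, Int.add_mul_ediv_right _ _ hpos.ne',
    Int.ediv_eq_zero_of_lt (by omega : (0:ℤ) ≤ (2 * j') % 2 ^ (p+1) + 1) hlt, zero_add]

def nu (s : Set ℝ) : ℝ := (volume s).toReal

lemma nu_dyadicI (k j : ℤ) : nu (dyadicI k j) = (2:ℝ) ^ k := by
  rw [nu, volume_dyadicI, ENNReal.toReal_ofReal (two_zpow_pos k).le]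

lemma nu_empty : nu (∅ : Set ℝ) = 0 := by simp [nu]

lemma integrable_ind_inter (k j k' j' : ℤ) :
    Integrable ((dyadicI k j ∩ dyadicI k' j').indicator (1 : ℝ → ℝ)) volume := by
  rw [integrable_indicator_iff ((measurableSet_dyadicI k j).inter (measurableSet_dyadicI k' j'))]
  refine integrableOn_const ?_
  exact ne_of_lt <| lt_of_le_of_lt (measure_mono inter_subset_left)
    (by rw [volume_dyadicI]; exact ENNReal.ofReal_lt_top)

lemma integral_ind_inter (k j k' j' : ℤ) :
    ∫ x, (dyadicI k j ∩ dyadicI k' j').indicator (1 : ℝ → ℝ) x =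
      nu (dyadicI k j ∩ dyadicI k' j') :=
  integral_indicator_one ((measurableSet_dyadicI k j).inter (measurableSet_dyadicI k' j'))

lemma haarFn_mul_eq (k j k' j' : ℤ) (x : ℝ) :
    haarFn k j x * haarFn k' j' x =
      ((2:ℝ) ^ k) ^ (-(1:ℝ)/2) * ((2:ℝ) ^ k') ^ (-(1:ℝ)/2) *
        ((dyadicI (k'-1) (2*j'+1) ∩ dyadicI (k-1) (2*j+1)).indicator 1 x
          + (dyadicI (k'-1) (2*j') ∩ dyadicI (k-1) (2*j)).indicator 1 x
          - (dyadicI (k'-1) (2*j'+1) ∩ dyadicI (k-1) (2*j)).indicator 1 x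
          - (dyadicI (k'-1) (2*j') ∩ dyadicI (k-1) (2*j+1)).indicator 1 x) := by
  simp only [haarFn, inter_indicator_one, Pi.mul_apply]
  ring

lemma integrable_haarFn_mul (k j k' j' : ℤ) :
    Integrable (fun x => haarFn k j x * haarFn k' j' x) volume := by
  simp only [haarFn_mul_eq]
  exact ((((integrable_ind_inter _ _ _ _).add (integrable_ind_inter _ _ _ _)).sub
    (integrable_ind_inter _ _ _ _)).sub (integrable_ind_inter _ _ _ _)).const_mul _

lemma integral_haarFn_mul (k j k' j' : ℤ) :
    ∫ x, haarFn k j x * haarFn k' j' x =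
      ((2:ℝ) ^ k) ^ (-(1:ℝ)/2) * ((2:ℝ) ^ k') ^ (-(1:ℝ)/2) *
        (nu (dyadicI (k'-1) (2*j'+1) ∩ dyadicI (k-1) (2*j+1))
          + nu (dyadicI (k'-1) (2*j') ∩ dyadicI (k-1) (2*j))
          - nu (dyadicI (k'-1) (2*j'+1) ∩ dyadicI (k-1) (2*j))
          - nu (dyadicI (k'-1) (2*j') ∩ dyadicI (k-1) (2*j+1))) := by
  simp only [haarFn_mul_eq]
  rw [integral_const_mul, integral_sub, integral_sub, integral_add] <;>
    first
      | exact integrable_ind_inter _ _ _ _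
      | exact (integrable_ind_inter _ _ _ _).add (integrable_ind_inter _ _ _ _)
      | exact ((integrable_ind_inter _ _ _ _).add (integrable_ind_inter _ _ _ _)).sub
          (integrable_ind_inter _ _ _ _)
      | rw [integral_ind_inter, integral_ind_inter, integral_ind_inter, integral_ind_inter]

lemma rpow_half_sq (k : ℤ) :
    ((2:ℝ) ^ k) ^ (-(1:ℝ)/2) * ((2:ℝ) ^ k) ^ (-(1:ℝ)/2) = ((2:ℝ) ^ k)⁻¹ := by
  rw [← Real.rpow_add (two_zpow_pos k)]
  norm_num [Real.rpow_neg_one]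

lemma integral_haarFn_self (k j : ℤ) : ∫ x, haarFn k j x * haarFn k j x = 1 := by
  rw [integral_haarFn_mul]
  have h0 : (k - 1 - (k - 1)).toNat = 0 := by omega
  rw [dyadicI_inter_of_le le_rfl, dyadicI_inter_of_le le_rfl, dyadicI_inter_of_le le_rfl,
    dyadicI_inter_of_le le_rfl, h0]
  simp only [pow_zero, Int.ediv_one]
  rw [if_pos trivial, if_pos trivial, if_neg (by omega), if_neg (by omega)]
  simp only [nu_dyadicI, nu_empty, rpow_half_sq]
  have h2 : (2:ℝ) ^ (k - 1) = 2 ^ k / 2 := by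
    rw [zpow_sub₀ (by norm_num : (2:ℝ) ≠ 0), zpow_one]
  rw [h2]
  field_simp
  ring

lemma integral_haarFn_same_scale (k j j' : ℤ) (h : j ≠ j') :
    ∫ x, haarFn k j x * haarFn k j' x = 0 := by
  rw [integral_haarFn_mul]
  have h0 : (k - 1 - (k - 1)).toNat = 0 := by omega
  rw [dyadicI_inter_of_le le_rfl, dyadicI_inter_of_le le_rfl, dyadicI_inter_of_le le_rfl,
    dyadicI_inter_of_le le_rfl, h0]
  simp only [pow_zero, Int.ediv_one]
  rw [if_neg (by omega), if_neg (by omega), if_neg (by omega), if_neg (by omega)]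
  simp [nu_empty]

lemma integral_haarFn_lt (k j k' j' : ℤ) (h : k' < k) :
    ∫ x, haarFn k j x * haarFn k' j' x = 0 := by
  rw [integral_haarFn_mul]
  have hle : k' - 1 ≤ k - 1 := by omega
  have hn : (k - 1 - (k' - 1)).toNat = (k - k' - 1).toNat + 1 := by omega
  rw [dyadicI_inter_of_le hle, dyadicI_inter_of_le hle, dyadicI_inter_of_le hle,
    dyadicI_inter_of_le hle, hn, ediv_two_pow_succ]
  split_ifs <;> simp [nu_dyadicI, nu_empty] <;> ring

lemma integral_haarFn_pair (p q : ℤ × ℤ) :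
    ∫ x, haarFn p.1 p.2 x * haarFn q.1 q.2 x = if p = q then 1 else 0 := by
  obtain ⟨k, j⟩ := p; obtain ⟨k', j'⟩ := q
  rcases lt_trichotomy k k' with hk | hk | hk
  · rw [if_neg (by simp [Prod.ext_iff]; omega)]
    rw [show (fun x => haarFn k j x * haarFn k' j' x) = fun x => haarFn k' j' x * haarFn k j x
      from funext fun x => mul_comm _ _]
    exact integral_haarFn_lt k' j' k j hk
  · subst hk
    by_cases hj : j = j'
    · subst hj; simp only [if_pos rfl]; exact integral_haarFn_self k j
    · rw [if_neg (by simp [Prod.ext_iff, hj]), integral_haarFn_same_scale k j j' hj]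
  · rw [if_neg (by simp [Prod.ext_iff]; omega), integral_haarFn_lt k j k' j' hk]

lemma measurable_haarFn (k j : ℤ) : Measurable (haarFn k j) := by
  unfold haarFn
  exact (((measurable_one.indicator (measurableSet_dyadicI _ _)).sub
    (measurable_one.indicator (measurableSet_dyadicI _ _))).const_mul _)

lemma measurable_haarR {d : ℕ} (r : Fin d → ℤ × ℤ) : Measurable (haarR r) := by
  unfold haarR
  exact Finset.measurable_prod _ fun i _ =>
    (measurable_haarFn _ _).comp (measurable_pi_apply i)

lemma integrable_haarR_mul {d : ℕ} (r r' : Fin d → ℤ × ℤ) :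
    Integrable (fun y => haarR r y * haarR r' y) volume := by
  have : (fun y : Fin d → ℝ => haarR r y * haarR r' y) =
      fun y => ∏ i, (fun t => haarFn (r i).1 (r i).2 t * haarFn (r' i).1 (r' i).2 t) (y i) := by
    funext y; rw [haarR, haarR, ← Finset.prod_mul_distrib]
  rw [this]
  exact Integrable.fintype_prod (𝕜 := ℝ) fun i => integrable_haarFn_mul _ _ _ _

lemma integral_haarR_mul {d : ℕ} (r r' : Fin d → ℤ × ℤ) :
    ∫ y, haarR r y * haarR r' y = if r = r' then 1 else 0 := by
  have : (fun y : Fin d → ℝ => haarR r y * haarR r' y) =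
      fun y => ∏ i, (fun t => haarFn (r i).1 (r i).2 t * haarFn (r' i).1 (r' i).2 t) (y i) := by
    funext y; rw [haarR, haarR, ← Finset.prod_mul_distrib]
  rw [this, MeasureTheory.integral_fintype_prod_volume_eq_prod (𝕜 := ℝ)
    (f := fun i t => haarFn (r i).1 (r i).2 t * haarFn (r' i).1 (r' i).2 t)]
  by_cases h : r = r'
  · subst h
    rw [if_pos rfl]
    rw [Finset.prod_eq_one]
    intro i _
    have := integral_haarFn_pair (r i) (r i)
    simpa using this
  · rw [if_neg h]
    obtain ⟨i, hi⟩ : ∃ i, r i ≠ r' i := by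
      by_contra hc
      push_neg at hc
      exact h (funext hc)
    refine Finset.prod_eq_zero (Finset.mem_univ i) ?_
    have := integral_haarFn_pair (r i) (r' i)
    simpa [hi] using this

open Classical in
lemma bessel {d : ℕ} (a : (Fin d → ℝ) → ℝ) (F : Finset (Fin d → ℤ × ℤ)) :
    ∑ r ∈ F, ENNReal.ofReal ((∫ y, a y * haarR r y) ^ 2) ≤ eLpNorm a 2 volume ^ (2:ℝ) := by
  set c := fun r : Fin d → ℤ × ℤ => ∫ y, a y * haarR r y with hc
  set F' := F.filter (fun r => Integrable (fun y => a y * haarR r y) volume) with hF'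
  have hsub : ∑ r ∈ F, ENNReal.ofReal (c r ^ 2) = ∑ r ∈ F', ENNReal.ofReal (c r ^ 2) := by
    refine (Finset.sum_filter_of_ne fun r hr hne => ?_).symm
    by_contra hni
    exact hne (by rw [hc]; simp only; rw [integral_undef hni]; simp)
  have hF'int : ∀ r ∈ F', Integrable (fun y => a y * haarR r y) volume :=
    fun r hr => (Finset.mem_filter.1 hr).2
  set g := fun y => ∑ r ∈ F', c r * haarR r y with hg
  set E := ∑ r ∈ F', c r ^ 2 with hE
  have hE0 : (0:ℝ) ≤ E := Finset.sum_nonneg fun _ _ => sq_nonneg _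
  have hmg : Measurable g := by
    apply Finset.measurable_sum
    exact fun r _ => (measurable_haarR r).const_mul _
  have hgsq : ∀ y, g y ^ 2 = ∑ r ∈ F', ∑ r' ∈ F', (c r * c r') * (haarR r y * haarR r' y) := by
    intro y
    rw [sq, hg, Finset.sum_mul_sum]
    exact Finset.sum_congr rfl fun r _ => Finset.sum_congr rfl fun r' _ => by ring
  have hIg2 : Integrable (fun y => g y ^ 2) volume := by
    simp only [hgsq]
    exact integrable_finset_sum _ fun r _ => integrable_finset_sum _ fun r' _ =>
      (integrable_haarR_mul r r').const_mul _
  have hIg2' : ∫ y, g y ^ 2 = E := by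
    simp only [hgsq]
    rw [integral_finset_sum _ (fun r _ => integrable_finset_sum _ fun r' _ =>
      (integrable_haarR_mul r r').const_mul _)]
    refine Finset.sum_congr rfl fun r hr => ?_
    rw [integral_finset_sum _ (fun r' _ => (integrable_haarR_mul r r').const_mul _)]
    have h1 : ∀ r' ∈ F', (∫ y, (c r * c r') * (haarR r y * haarR r' y)) =
        if r = r' then c r * c r' else 0 := by
      intro r' _
      rw [integral_const_mul, integral_haarR_mul]
      split_ifs <;> simp
    rw [Finset.sum_congr rfl h1, Finset.sum_ite_eq]
    rw [if_pos hr, sq]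
  have hmulg : (fun y => a y * g y) = fun y => ∑ r ∈ F', c r * (a y * haarR r y) := by
    funext y
    rw [hg, Finset.mul_sum]
    exact Finset.sum_congr rfl fun r _ => by ring
  have hIag : Integrable (fun y => a y * g y) volume := by
    rw [hmulg]
    exact integrable_finset_sum _ fun r hr => (hF'int r hr).const_mul _
  have hag : ∫ y, a y * g y = E := by
    rw [hmulg, integral_finset_sum _ fun r hr => (hF'int r hr).const_mul _]
    refine Finset.sum_congr rfl fun r hr => ?_
    rw [integral_const_mul, sq]
  set N := eLpNorm a 2 volume with hN
  -- Hölder with the measurable density trick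
  set G := fun y => (‖g y‖₊ : ℝ≥0∞) with hG
  set U := fun y => (‖a y * g y‖₊ : ℝ≥0∞) with hU
  have hUm : AEMeasurable U volume := hIag.aestronglyMeasurable.enorm
  have hGm : Measurable G := hmg.nnnorm.coe_nnreal_ennreal
  set φ := fun y => U y * ({y | g y ≠ 0}.indicator (fun y => (G y)⁻¹) y) with hφ
  have hsm : MeasurableSet {y : Fin d → ℝ | g y ≠ 0} :=
    (hmg (measurableSet_singleton 0)).compl
  have hφm : AEMeasurable φ volume :=
    hUm.mul (hGm.inv.indicator hsm).aemeasurable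
  have hGy0 : ∀ y, g y ≠ 0 → G y ≠ 0 := by
    intro y hy
    simp [hG, hy]
  have hUeq : ∀ y, U y = φ y * G y := by
    intro y
    by_cases hy : g y = 0
    · have : a y * g y = 0 := by rw [hy, mul_zero]
      simp [hU, hG, hφ, this, hy]
    · show U y = U y * {y | g y ≠ 0}.indicator (fun y => (G y)⁻¹) y * G y
      rw [Set.indicator_of_mem (by exact hy : y ∈ {y | g y ≠ 0})]
      rw [mul_assoc, ENNReal.inv_mul_cancel (hGy0 y hy) ENNReal.coe_ne_top, mul_one]
  have hφle : ∀ y, φ y ≤ (‖a y‖₊ : ℝ≥0∞) := by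
    intro y
    by_cases hy : g y = 0
    · show U y * {y | g y ≠ 0}.indicator (fun y => (G y)⁻¹) y ≤ _
      rw [Set.indicator_of_notMem (by simp [hy] : y ∉ {y | g y ≠ 0}), mul_zero]
      exact zero_le
    · show U y * {y | g y ≠ 0}.indicator (fun y => (G y)⁻¹) y ≤ _
      rw [Set.indicator_of_mem (by exact hy : y ∈ {y | g y ≠ 0})]
      have hUy : U y = (‖a y‖₊ : ℝ≥0∞) * G y := by
        rw [hU]; simp only
        rw [nnnorm_mul, ENNReal.coe_mul]
      rw [hUy, mul_assoc, ENNReal.mul_inv_cancel (hGy0 y hy) ENNReal.coe_ne_top, mul_one]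
  have h22 : (2:ℝ).HolderConjugate 2 := ⟨by norm_num, by norm_num, by norm_num⟩
  have holder := ENNReal.lintegral_mul_le_Lp_mul_Lq volume h22 hφm hGm.aemeasurable
  have hNa : (∫⁻ y, (‖a y‖₊ : ℝ≥0∞) ^ (2:ℝ)) ^ ((1:ℝ)/2) = N := by
    rw [hN, eLpNorm_eq_lintegral_rpow_enorm_toReal (by norm_num) (by norm_num)]
    norm_num
    rfl
  have hGE : (∫⁻ y, G y ^ (2:ℝ)) = ENNReal.ofReal E := by
    have h1 : ∀ y, G y ^ (2:ℝ) = ENNReal.ofReal (g y ^ 2) := by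
      intro y
      rw [hG]; simp only
      rw [← enorm_eq_nnnorm, Real.enorm_eq_ofReal_abs, ENNReal.ofReal_rpow_of_nonneg (abs_nonneg _) (by norm_num),
        show (2:ℝ) = ((2:ℕ):ℝ) by norm_num, Real.rpow_natCast, sq_abs]
    simp only [h1]
    rw [← ofReal_integral_eq_lintegral_ofReal hIg2 (Filter.Eventually.of_forall fun y => sq_nonneg _),
      hIg2']
  have key : ENNReal.ofReal E ≤ N * ENNReal.ofReal E ^ ((1:ℝ)/2) := by
    calc ENNReal.ofReal E = ENNReal.ofReal (∫ y, a y * g y) := by rw [hag]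
    _ ≤ ENNReal.ofReal (∫ y, ‖a y * g y‖) :=
        ENNReal.ofReal_le_ofReal ((le_abs_self _).trans (by
          rw [← Real.norm_eq_abs]
          exact norm_integral_le_integral_norm _))
    _ = ∫⁻ y, U y := ofReal_integral_norm_eq_lintegral_enorm hIag
    _ = ∫⁻ y, (φ * G) y := by simp only [Pi.mul_apply, ← hUeq]
    _ ≤ (∫⁻ y, φ y ^ (2:ℝ)) ^ (1/(2:ℝ)) * (∫⁻ y, G y ^ (2:ℝ)) ^ (1/(2:ℝ)) := holder
    _ ≤ (∫⁻ y, (‖a y‖₊ : ℝ≥0∞) ^ (2:ℝ)) ^ (1/(2:ℝ)) * (∫⁻ y, G y ^ (2:ℝ)) ^ (1/(2:ℝ)) := by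
        have hmono : (∫⁻ y, φ y ^ (2:ℝ)) ≤ ∫⁻ y, (‖a y‖₊ : ℝ≥0∞) ^ (2:ℝ) :=
          lintegral_mono fun y => ENNReal.rpow_le_rpow (hφle y) (by norm_num)
        exact mul_le_mul_left (ENNReal.rpow_le_rpow hmono (by norm_num)) _
    _ = N * ENNReal.ofReal E ^ ((1:ℝ)/2) := by
        rw [hGE, ← hNa]
  have final : ENNReal.ofReal E ≤ N ^ (2:ℝ) := by
    rcases eq_or_ne (ENNReal.ofReal E) 0 with h | h
    · rw [h]; exact zero_le
    · have hne : ENNReal.ofReal E ≠ ⊤ := ENNReal.ofReal_ne_top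
      have h12 : ENNReal.ofReal E ^ ((1:ℝ)/2) ≠ 0 := by
        simp [ENNReal.rpow_eq_zero_iff, h, hne]
      have h12t : ENNReal.ofReal E ^ ((1:ℝ)/2) ≠ ⊤ := by
        simp [ENNReal.rpow_eq_top_iff, h, hne]
      have hsplit : ENNReal.ofReal E ^ ((1:ℝ)/2) * ENNReal.ofReal E ^ ((1:ℝ)/2) =
          ENNReal.ofReal E := by
        rw [← ENNReal.rpow_add _ _ h hne]
        norm_num
      have hhalf : ENNReal.ofReal E ^ ((1:ℝ)/2) ≤ N := by
        have hk := key
        nth_rewrite 1 [← hsplit] at hk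
        exact (ENNReal.mul_le_mul_iff_left h12 h12t).1 hk
      calc ENNReal.ofReal E = (ENNReal.ofReal E ^ ((1:ℝ)/2)) ^ (2:ℝ) := by
            rw [← ENNReal.rpow_mul]; norm_num
      _ ≤ N ^ (2:ℝ) := ENNReal.rpow_le_rpow hhalf (by norm_num)
  calc ∑ r ∈ F, ENNReal.ofReal (c r ^ 2) = ∑ r ∈ F', ENNReal.ofReal (c r ^ 2) := hsub
  _ = ENNReal.ofReal E := (ENNReal.ofReal_sum_of_nonneg fun r _ => sq_nonneg _).symm
  _ ≤ N ^ (2:ℝ) := final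

lemma volume_rect_ne_zero {d : ℕ} (r : Fin d → ℤ × ℤ) : volume (rect r) ≠ 0 := by
  rw [rect, volume_pi_pi]
  simp only [volume_dyadicI]
  rw [Finset.prod_ne_zero_iff]
  intro i _
  simp only [ne_eq, ENNReal.ofReal_eq_zero, not_le]
  exact two_zpow_pos _

lemma sqrt_ofReal_le {x : ℝ} (hx : 0 ≤ x) {T : ℝ≥0∞} (h : ENNReal.ofReal x ≤ T) :
    ENNReal.ofReal (Real.sqrt x) ≤ T ^ ((1:ℝ)/2) := by
  rw [Real.sqrt_eq_rpow, ← ENNReal.ofReal_rpow_of_nonneg hx (by norm_num)]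
  exact ENNReal.rpow_le_rpow h (by norm_num)

/-- If b ∈ product BMO and a is an H¹ atom with Haar support in a set A of
finite measure and ‖a‖₂ ≤ |A|^(-1/2), then
∑_(R ⊆ A) |⟨b,h_R⟩ ⟨a,h_R⟩| ≤ ‖b‖_(BMO_d). -/
theorem stmt15 (d : ℕ) (b a : (Fin d → ℝ) → ℝ) (A : Set (Fin d → ℝ))
    (hA : MeasurableSet A) (hAvol : volume A < ⊤)
    (hsupp : ∀ r : Fin d → ℤ × ℤ, ¬ rect r ⊆ A → (∫ y, a y * haarR r y) = 0)
    (hsize : eLpNorm a 2 volume ≤ (volume A) ^ (-(1 : ℝ) / 2)) :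
    ∑' r : {r : Fin d → ℤ × ℤ // rect r ⊆ A},
        ENNReal.ofReal |(∫ y, b y * haarR r.1 y) * (∫ y, a y * haarR r.1 y)| ≤
      bmoProd d b := by
  classical
  by_cases hA0 : volume A = 0
  · haveI : IsEmpty {r : Fin d → ℤ × ℤ // rect r ⊆ A} := by
      refine ⟨fun ⟨r, hr⟩ => ?_⟩
      exact volume_rect_ne_zero r (le_antisymm (hA0 ▸ measure_mono hr) (zero_le))
    rw [tsum_empty]
    exact zero_le
  set B := bmoProd d b with hB
  set S := {r : Fin d → ℤ × ℤ // rect r ⊆ A}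
  set cb := fun r : Fin d → ℤ × ℤ => ∫ y, b y * haarR r y with hcb
  set ca := fun r : Fin d → ℤ × ℤ => ∫ y, a y * haarR r y with hca
  set Tb := ∑' r : S, ENNReal.ofReal (cb r.1 ^ 2) with hTb
  set Ta := ∑' r : S, ENNReal.ofReal (ca r.1 ^ 2) with hTa
  -- Step B : Ta ≤ N ^ 2
  set N := eLpNorm a 2 volume with hN
  have hTaN : Ta ≤ N ^ (2:ℝ) := by
    rw [hTa, ENNReal.tsum_eq_iSup_sum]
    refine iSup_le fun F => ?_
    have := bessel a (F.image Subtype.val)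
    refine le_trans (le_of_eq ?_) this
    rw [Finset.sum_image (fun x _ y _ h => Subtype.ext h)]
  -- Step C : Tb ≤ volume A * B ^ 2
  have hSU : ∀ U : Set (Fin d → ℝ), IsOpen U → volume U < ⊤ → A ⊆ U →
      Tb ≤ volume U * B ^ (2:ℝ) := by
    intro U hUo hUfin hAU
    set SU := ∑' r : {r : Fin d → ℤ × ℤ // rect r ⊆ U},
      ENNReal.ofReal (cb r.1 ^ 2) with hSUdef
    have hU0 : volume U ≠ 0 := fun h =>
      hA0 (le_antisymm (h ▸ measure_mono hAU) (zero_le))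
    have hTbSU : Tb ≤ SU := by
      refine Summable.tsum_le_tsum_of_inj (fun x : S => (⟨x.1, x.2.trans hAU⟩ :
          {r : Fin d → ℤ × ℤ // rect r ⊆ U})) ?_ (fun _ _ => zero_le)
        (fun x => le_rfl) ENNReal.summable ENNReal.summable
      intro x y h
      exact Subtype.ext (congrArg (fun z : {r : Fin d → ℤ × ℤ // rect r ⊆ U} => z.1) h)
    have hterm : ((volume U)⁻¹ * SU) ^ ((1:ℝ)/2) ≤ B := by
      rw [hB, bmoProd]
      exact le_iSup_of_le ⟨U, hUo, hUfin⟩ le_rfl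
    have hsq : (volume U)⁻¹ * SU ≤ B ^ (2:ℝ) := by
      have := ENNReal.rpow_le_rpow hterm (by norm_num : (0:ℝ) ≤ 2)
      rwa [← ENNReal.rpow_mul, one_div, inv_mul_cancel₀ (by norm_num : (2:ℝ) ≠ 0),
        ENNReal.rpow_one] at this
    have hSUle : SU ≤ volume U * B ^ (2:ℝ) := by
      calc SU = volume U * ((volume U)⁻¹ * SU) := by
            rw [← mul_assoc, ENNReal.mul_inv_cancel hU0 hUfin.ne, one_mul]
      _ ≤ volume U * B ^ (2:ℝ) := mul_le_mul_right hsq _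
    exact hTbSU.trans hSUle
  have hTbA : Tb ≤ volume A * B ^ (2:ℝ) := by
    by_cases hB2 : B ^ (2:ℝ) = 0
    · obtain ⟨U, hAU, hUo, hUlt⟩ := Set.exists_isOpen_lt_add A hAvol.ne one_ne_zero
      have := hSU U hUo (hUlt.trans_le le_top) hAU
      rw [hB2, mul_zero] at this ⊢
      exact this
    · refine ENNReal.le_of_forall_pos_le_add fun ε hε hlt => ?_
      have hB2top : B ^ (2:ℝ) ≠ ⊤ := by
        intro h
        rw [h] at hlt
        exact (lt_irrefl _ (hlt.trans_le (le_top.trans (le_of_eq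
          (ENNReal.mul_top hA0).symm)))).elim
      set δ := (ε : ℝ≥0∞) / B ^ (2:ℝ) with hδ
      have hδ0 : δ ≠ 0 := by
        rw [hδ, ne_eq, ENNReal.div_eq_zero_iff]
        push_neg
        exact ⟨(ENNReal.coe_ne_zero).2 hε.ne', hB2top⟩
      obtain ⟨U, hAU, hUo, hUlt⟩ := Set.exists_isOpen_lt_add A hAvol.ne hδ0
      have hδtop : δ ≠ ⊤ := by
        rw [hδ]
        exact (ENNReal.div_lt_top ENNReal.coe_ne_top hB2).ne
      have hUfin : volume U < ⊤ :=
        hUlt.trans (ENNReal.add_lt_top.2 ⟨hAvol, hδtop.lt_top⟩)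
      calc Tb ≤ volume U * B ^ (2:ℝ) := hSU U hUo hUfin hAU
      _ ≤ (volume A + δ) * B ^ (2:ℝ) := mul_le_mul_left hUlt.le _
      _ = volume A * B ^ (2:ℝ) + δ * B ^ (2:ℝ) := add_mul _ _ _
      _ = volume A * B ^ (2:ℝ) + ε := by
          rw [hδ, ENNReal.div_mul_cancel hB2 hB2top]
  -- Step A : Cauchy-Schwarz
  have hCS : (∑' r : S, ENNReal.ofReal |cb r.1 * ca r.1|) ≤
      Tb ^ ((1:ℝ)/2) * Ta ^ ((1:ℝ)/2) := by
    rw [ENNReal.tsum_eq_iSup_sum]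
    refine iSup_le fun F => ?_
    have h1 : ∀ r : S, |cb r.1 * ca r.1| = |cb r.1| * |ca r.1| := fun r => abs_mul _ _
    calc ∑ r ∈ F, ENNReal.ofReal |cb r.1 * ca r.1|
        = ENNReal.ofReal (∑ r ∈ F, |cb r.1| * |ca r.1|) := by
          rw [ENNReal.ofReal_sum_of_nonneg fun r _ => mul_nonneg (abs_nonneg _) (abs_nonneg _)]
          exact Finset.sum_congr rfl fun r _ => by rw [h1]
    _ ≤ ENNReal.ofReal (Real.sqrt (∑ r ∈ F, |cb r.1| ^ 2) *
          Real.sqrt (∑ r ∈ F, |ca r.1| ^ 2)) :=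
        ENNReal.ofReal_le_ofReal (Real.sum_mul_le_sqrt_mul_sqrt F _ _)
    _ = ENNReal.ofReal (Real.sqrt (∑ r ∈ F, cb r.1 ^ 2)) *
          ENNReal.ofReal (Real.sqrt (∑ r ∈ F, ca r.1 ^ 2)) := by
        simp only [sq_abs]
        rw [ENNReal.ofReal_mul (Real.sqrt_nonneg _)]
    _ ≤ Tb ^ ((1:ℝ)/2) * Ta ^ ((1:ℝ)/2) := by
        refine mul_le_mul' ?_ ?_
        · refine sqrt_ofReal_le (Finset.sum_nonneg fun r _ => sq_nonneg _) ?_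
          rw [ENNReal.ofReal_sum_of_nonneg fun r _ => sq_nonneg _]
          exact (ENNReal.sum_le_tsum F).trans le_rfl
        · refine sqrt_ofReal_le (Finset.sum_nonneg fun r _ => sq_nonneg _) ?_
          rw [ENNReal.ofReal_sum_of_nonneg fun r _ => sq_nonneg _]
          exact (ENNReal.sum_le_tsum F).trans le_rfl
  -- Combine
  have h1 : Tb ^ ((1:ℝ)/2) ≤ (volume A) ^ ((1:ℝ)/2) * B := by
    calc Tb ^ ((1:ℝ)/2) ≤ (volume A * B ^ (2:ℝ)) ^ ((1:ℝ)/2) :=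
        ENNReal.rpow_le_rpow hTbA (by norm_num)
    _ = (volume A) ^ ((1:ℝ)/2) * (B ^ (2:ℝ)) ^ ((1:ℝ)/2) :=
        ENNReal.mul_rpow_of_nonneg _ _ (by norm_num)
    _ = (volume A) ^ ((1:ℝ)/2) * B := by
        rw [← ENNReal.rpow_mul]
        norm_num
  have h2 : Ta ^ ((1:ℝ)/2) ≤ (volume A) ^ (-(1:ℝ)/2) := by
    calc Ta ^ ((1:ℝ)/2) ≤ (N ^ (2:ℝ)) ^ ((1:ℝ)/2) := ENNReal.rpow_le_rpow hTaN (by norm_num)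
    _ = N := by rw [← ENNReal.rpow_mul]; norm_num
    _ ≤ (volume A) ^ (-(1:ℝ)/2) := hsize
  calc ∑' r : S, ENNReal.ofReal |cb r.1 * ca r.1| ≤ Tb ^ ((1:ℝ)/2) * Ta ^ ((1:ℝ)/2) := hCS
  _ ≤ ((volume A) ^ ((1:ℝ)/2) * B) * (volume A) ^ (-(1:ℝ)/2) := mul_le_mul' h1 h2
  _ = B * ((volume A) ^ ((1:ℝ)/2) * (volume A) ^ (-(1:ℝ)/2)) := by ring
  _ = B * (volume A) ^ ((1:ℝ)/2 + -(1:ℝ)/2) := by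
      rw [ENNReal.rpow_add _ _ hA0 hAvol.ne]
  _ = B := by norm_num
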